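/- arXiv:2601.16848 — 5 statements merged into one kernel-verified Lean document; each statement's English description precedes it below -/
import Mathlib

section
/- For every natural number n and every real θ > 0, ∫_0^∞ y^n e^{-y} / (y + θ) dy = n! · e^{θ} · E_{n+1}(θ). -/
open MeasureTheory Real

/-- The generalized exponential integral `E_n(x) = ∫_1^∞ e^{-x t} / t^n dt`. -/
noncomputable def expInt (n : ℕ) (x : ℝ) : ℝ :=
  ∫ t in Set.Ioi (1 : ℝ), Real.exp (-x * t) / t ^ n

/-!
Let `I_n(θ)` be the left-hand side. Since `y^{n+1} / (y + θ) = y^n - θ y^n / (y + θ)` and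
`∫_0^∞ y^n e^{-y} dy = n!`, we get `I_{n+1} = n! - θ I_n`. Integrating `e^{-θ t} / t^{n+1}` by
parts gives the recurrence `n E_{n+1}(θ) = e^{-θ} - θ E_n(θ)`, so `n! e^θ E_{n+1}(θ)` satisfies
the same recursion. At `n = 0` both sides agree by the substitution `y + θ = θ t`.
-/

open Set Filter Topology
open scoped Nat

theorem hasDerivAt_neg_exp_neg_mul_div_pow (n : ℕ) (x : ℝ) {t : ℝ} (ht : t ≠ 0) :
    HasDerivAt (fun t => -exp (-x * t) / t ^ n)
      (x * (exp (-x * t) / t ^ n) + n * (exp (-x * t) / t ^ (n + 1))) t := by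
  have hexp : HasDerivAt (fun t => -exp (-x * t)) (x * exp (-x * t)) t :=
    ((hasDerivAt_id' t).const_mul (-x)).exp.neg.congr_deriv (by ring)
  refine (hexp.div (hasDerivAt_pow n t) (pow_ne_zero n ht)).congr_deriv ?_
  rcases n with _ | n
  · simp
  · rw [Nat.add_sub_cancel]
    field_simp
    ring

theorem tendsto_exp_neg_mul_div_pow_atTop (n : ℕ) {x : ℝ} (hx : 0 < x) :
    Tendsto (fun t => exp (-x * t) / t ^ n) atTop (𝓝 0) := by
  have hexp : Tendsto (fun t => exp (-x * t)) atTop (𝓝 0) := by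
    simpa only [neg_mul, Function.comp_def, id] using
      tendsto_exp_neg_atTop_nhds_zero.comp (tendsto_id.const_mul_atTop hx)
  refine squeeze_zero' ?_ ?_ hexp
  · filter_upwards [eventually_ge_atTop 0] with t ht using by positivity
  · filter_upwards [eventually_ge_atTop 1] with t ht
      using div_le_self (exp_pos _).le (one_le_pow₀ ht)

theorem integrableOn_exp_neg_mul_div_pow_Ioi_one (n : ℕ) {x : ℝ} (hx : 0 < x) :
    IntegrableOn (fun t => exp (-x * t) / t ^ n) (Ioi 1) := by
  refine (exp_neg_integrableOn_Ioi 1 hx).mono' ?_ ?_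
  · exact (ContinuousOn.div (by fun_prop) (by fun_prop) fun t ht =>
      pow_ne_zero n (zero_lt_one.trans ht).ne').aestronglyMeasurable measurableSet_Ioi
  · filter_upwards [ae_restrict_mem measurableSet_Ioi] with t ht
    have ht1 : 1 ≤ t := le_of_lt ht
    rw [norm_of_nonneg (by positivity)]
    exact div_le_self (exp_pos _).le (one_le_pow₀ ht1)

theorem expInt_succ (n : ℕ) {x : ℝ} (hx : 0 < x) :
    n * expInt (n + 1) x = exp (-x) - x * expInt n x := by
  have hint := integrableOn_exp_neg_mul_div_pow_Ioi_one n hx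
  have hint_succ := integrableOn_exp_neg_mul_div_pow_Ioi_one (n + 1) hx
  have key := integral_Ioi_of_hasDerivAt_of_tendsto'
    (fun t ht => hasDerivAt_neg_exp_neg_mul_div_pow n x (zero_lt_one.trans_le ht).ne')
    ((hint.const_mul x).add (hint_succ.const_mul n))
    (by simpa [neg_div] using (tendsto_exp_neg_mul_div_pow_atTop n hx).neg)
  rw [integral_add (hint.const_mul x) (hint_succ.const_mul n), integral_const_mul,
    integral_const_mul] at key
  simp only [one_pow, mul_one, div_one] at key
  unfold expInt
  linarith

theorem integral_comp_add_right_Ioi {E : Type*} [NormedAddCommGroup E] [NormedSpace ℝ E]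
    (g : ℝ → E) (a d : ℝ) : ∫ x in Ioi a, g (x + d) = ∫ x in Ioi (a + d), g x := by
  have h := (measurePreserving_add_right volume d).setIntegral_preimage_emb
    (measurableEmbedding_addRight d) g (Ioi (a + d))
  rwa [preimage_add_const_Ioi, add_sub_cancel_right] at h

theorem expInt_one_eq_integral_exp_neg_div_Ioi {x : ℝ} (hx : 0 < x) :
    expInt 1 x = ∫ u in Ioi x, exp (-u) / u := by
  have hscale := integral_comp_mul_left_Ioi' (fun u => exp (-u) / u) 1 hx
  rw [mul_one, smul_eq_mul, ← integral_const_mul] at hscale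
  rw [expInt, ← hscale]
  refine setIntegral_congr_fun measurableSet_Ioi fun t ht => ?_
  have ht0 : 0 < t := zero_lt_one.trans ht
  field_simp

theorem integral_exp_neg_div_add_Ioi {θ : ℝ} (hθ : 0 < θ) :
    ∫ y in Ioi 0, exp (-y) / (y + θ) = exp θ * expInt 1 θ := by
  rw [expInt_one_eq_integral_exp_neg_div_Ioi hθ, ← zero_add θ,
    ← integral_comp_add_right_Ioi, ← integral_const_mul, zero_add]
  refine setIntegral_congr_fun measurableSet_Ioi fun y _ => ?_
  rw [mul_div_assoc', ← exp_add]
  ring_nf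

theorem integrableOn_pow_mul_exp_neg_Ioi (n : ℕ) :
    IntegrableOn (fun y => y ^ n * exp (-y)) (Ioi 0) := by
  refine (GammaIntegral_convergent (s := n + 1) (by positivity)).congr_fun (fun y _ => ?_)
    measurableSet_Ioi
  simp [mul_comm]

theorem integral_pow_mul_exp_neg_Ioi (n : ℕ) :
    ∫ y in Ioi 0, y ^ n * exp (-y) = n ! := by
  rw [← Gamma_nat_eq_factorial, Gamma_eq_integral (by positivity)]
  refine setIntegral_congr_fun measurableSet_Ioi fun y _ => ?_
  simp [mul_comm]

theorem integrableOn_pow_mul_exp_neg_div_add_Ioi (n : ℕ) {θ : ℝ} (hθ : 0 < θ) :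
    IntegrableOn (fun y => y ^ n * exp (-y) / (y + θ)) (Ioi 0) := by
  refine ((integrableOn_pow_mul_exp_neg_Ioi n).mul_const θ⁻¹).mono' ?_ ?_
  · exact (ContinuousOn.div (by fun_prop) (by fun_prop) fun y (hy : 0 < y) =>
      (add_pos hy hθ).ne').aestronglyMeasurable measurableSet_Ioi
  · filter_upwards [ae_restrict_mem measurableSet_Ioi] with y (hy : 0 < y)
    rw [norm_of_nonneg (by positivity), div_eq_mul_inv]
    gcongr
    linarith

theorem integral_pow_succ_mul_exp_neg_div_add_Ioi (n : ℕ) {θ : ℝ} (hθ : 0 < θ) :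
    ∫ y in Ioi 0, y ^ (n + 1) * exp (-y) / (y + θ) =
      (n ! : ℝ) - θ * ∫ y in Ioi 0, y ^ n * exp (-y) / (y + θ) := by
  rw [← integral_pow_mul_exp_neg_Ioi, ← integral_const_mul, ← integral_sub
    (integrableOn_pow_mul_exp_neg_Ioi n)
    ((integrableOn_pow_mul_exp_neg_div_add_Ioi n hθ).const_mul θ)]
  refine setIntegral_congr_fun measurableSet_Ioi fun y (hy : 0 < y) => ?_
  have : y + θ ≠ 0 := (add_pos hy hθ).ne'
  field_simp
  ring

/-- For every natural number `n` and every real `θ > 0`,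
`∫_0^∞ yⁿ e^{-y} / (y + θ) dy = n! ⬝ e^{θ} ⬝ E_{n+1}(θ)`. -/
theorem integral_pow_mul_exp_div_add (n : ℕ) (θ : ℝ) (hθ : 0 < θ) :
    ∫ y in Set.Ioi (0 : ℝ), y ^ n * Real.exp (-y) / (y + θ) =
      (Nat.factorial n : ℝ) * Real.exp θ * expInt (n + 1) θ := by
  induction n with
  | zero => simpa using integral_exp_neg_div_add_Ioi hθ
  | succ n ih =>
    have hrec := expInt_succ (n + 1) hθ
    have hexp : exp θ * exp (-θ) = 1 := by rw [← exp_add, add_neg_cancel, exp_zero]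
    rw [integral_pow_succ_mul_exp_neg_div_add_Ioi n hθ, ih, Nat.factorial_succ]
    push_cast at hrec ⊢
    linear_combination (-(n ! * exp θ)) * hrec - n ! * hexp
end

section
/- Let M ≥ 1 be an integer, γ > 0, and let G be a random variable whose law is the Gamma distribution with integer shape M and rate 1/γ (i.e., density x^{M−1} e^{-x/γ} / (γ^M (M−1)!) on (0,∞)). Then for every constant c > 0, E[log(1 + c·G)] = e^{θ} · Σ_{i=0}^{M−1} E_{i+1}(θ), where θ = 1/(c·γ). In particular, for a user at distance r > 0 with bandwidth B > 0, transmit power ℓ = min(P r^{αε}, P̄) with P, P̄ > 0, α > 2, ε ∈ [0,1], noise power spectral density N₀ > 0, and fading gain distributed as G, the ergodic capacity B·E[log₂(1 + G·ℓ·r^{-α}/(B N₀))] equals (B / log 2) · e^{θ} · Σ_{i=0}^{M−1} E_{i+1}(θ) with θ = B N₀ r^{α} / (γ ℓ). -/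
/-!
Write `p_k(x) = x^k e^{-x} / k!` for the Gamma(k+1, 1) density and `θ = λ / c`, where `λ` is the
rate of `G`. Rescaling `x = λ G` gives `E[log(1 + c G)] = ∫_0^∞ log(1 + x/θ) p_{M-1}(x) dx`.
Since `p_{M-1} = -S'` for the Gamma(M, 1) survival function `S = ∑_{k<M} p_k`, integration by
parts turns this into `∑_{k<M} ∫_0^∞ p_k(x) / (θ + x) dx`. Because `(k+1) p_{k+1}(x) = x p_k(x)`
and `∫ p_k = 1`, these integrals satisfy the same recurrence in `k` as `e^θ E_{k+1}(θ)`, which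
comes from `n E_{n+1}(θ) = e^{-θ} - θ E_n(θ)`; at `k = 0` both equal `∫_0^∞ e^{-x} / (θ + x) dx`
by the substitution `t = 1 + x/θ`.
-/

open MeasureTheory Real ProbabilityTheory

open Set Filter Topology
open scoped Nat

noncomputable def poissonWeight (k : ℕ) (x : ℝ) : ℝ := x ^ k / k ! * exp (-x)

namespace poissonWeight

@[fun_prop]
lemma continuous (k : ℕ) : Continuous (poissonWeight k) := by
  unfold poissonWeight; fun_prop

lemma nonneg (k : ℕ) {x : ℝ} (hx : 0 ≤ x) : 0 ≤ poissonWeight k x := by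
  unfold poissonWeight; positivity

lemma mul_eq_add_one_mul_succ (k : ℕ) (x : ℝ) :
    x * poissonWeight k x = (k + 1) * poissonWeight (k + 1) x := by
  simp only [poissonWeight, Nat.factorial_succ, Nat.cast_mul, Nat.cast_succ, pow_succ]
  field_simp

lemma hasDerivAt_zero (x : ℝ) : HasDerivAt (poissonWeight 0) (-poissonWeight 0 x) x := by
  unfold poissonWeight
  simpa using (hasDerivAt_neg x).exp

lemma hasDerivAt_succ (k : ℕ) (x : ℝ) :
    HasDerivAt (poissonWeight (k + 1)) (poissonWeight k x - poissonWeight (k + 1) x) x := by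
  unfold poissonWeight
  refine (((hasDerivAt_pow (k + 1) x).div_const ((k + 1)! : ℝ)).fun_mul
    (hasDerivAt_neg x).exp).congr_deriv ?_
  rw [Nat.factorial_succ, Nat.cast_mul, Nat.add_sub_cancel]
  field_simp
  ring

lemma hasDerivAt_sum (m : ℕ) (x : ℝ) :
    HasDerivAt (fun y ↦ ∑ k ∈ Finset.range (m + 1), poissonWeight k y) (-poissonWeight m x) x := by
  induction m with
  | zero => simpa using hasDerivAt_zero x
  | succ m ih =>
    simp_rw [Finset.sum_range_succ _ (m + 1)]
    exact (ih.fun_add (hasDerivAt_succ m x)).congr_deriv (by ring)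

lemma tendsto_atTop (k : ℕ) : Tendsto (poissonWeight k) atTop (𝓝 0) := by
  convert (tendsto_pow_mul_exp_neg_atTop_nhds_zero k).div_const (k ! : ℝ) using 2 with x
  · simp only [poissonWeight]; ring
  · simp

lemma tendsto_sum_atTop (m : ℕ) :
    Tendsto (fun y ↦ ∑ k ∈ Finset.range (m + 1), poissonWeight k y) atTop (𝓝 0) := by
  simpa using tendsto_finsetSum _ fun k _ ↦ tendsto_atTop k

lemma sum_zero_right (m : ℕ) : ∑ k ∈ Finset.range (m + 1), poissonWeight k 0 = 1 := by
  rw [Finset.sum_range_succ']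
  simp [poissonWeight]

lemma integrableOn_Ioi (k : ℕ) : IntegrableOn (poissonWeight k) (Ioi 0) := by
  simpa using (integrableOn_Ioi_deriv_of_nonpos' (fun x _ ↦ hasDerivAt_sum k x)
    (fun x hx ↦ neg_nonpos.2 (nonneg k hx.le)) (tendsto_sum_atTop k)).neg

lemma integral_Ioi (k : ℕ) : ∫ x in Ioi 0, poissonWeight k x = 1 := by
  have h := integral_Ioi_of_hasDerivAt_of_nonpos' (fun x _ ↦ hasDerivAt_sum k x)
    (fun x hx ↦ neg_nonpos.2 (nonneg k hx.le)) (tendsto_sum_atTop k)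
  rw [integral_neg, sum_zero_right] at h
  linarith

end poissonWeight

lemma integral_Ioi_comp_const_add {E : Type*} [NormedAddCommGroup E] [NormedSpace ℝ E]
    (f : ℝ → E) (a b : ℝ) : ∫ x in Ioi a, f (b + x) = ∫ x in Ioi (b + a), f x := by
  rw [← (measurePreserving_add_left volume b).setIntegral_preimage_emb
    (measurableEmbedding_addLeft b) f (Ioi (b + a)), preimage_const_add_Ioi, add_sub_cancel_left]

section ExpInt

variable {θ : ℝ}

lemma integrableOn_exp_neg_mul_div_pow (n : ℕ) (hθ : 0 < θ) :
    IntegrableOn (fun t ↦ exp (-θ * t) / t ^ n) (Ioi 1) := by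
  refine (exp_neg_integrableOn_Ioi 1 hθ).mono' (by fun_prop : Measurable _).aestronglyMeasurable ?_
  filter_upwards [ae_restrict_mem measurableSet_Ioi] with t (ht : 1 < t)
  rw [norm_div, norm_of_nonneg (exp_pos _).le, norm_of_nonneg (by positivity)]
  exact div_le_self (exp_pos _).le (one_le_pow₀ ht.le)

lemma add_one_mul_expInt_add_two (k : ℕ) (hθ : 0 < θ) :
    (k + 1) * expInt (k + 2) θ = exp (-θ) - θ * expInt (k + 1) θ := by
  have hderiv (t : ℝ) (ht : t ∈ Ici 1) : HasDerivAt (fun t ↦ exp (-θ * t) / t ^ (k + 1))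
      (-θ * (exp (-θ * t) / t ^ (k + 1)) - (k + 1) * (exp (-θ * t) / t ^ (k + 2))) t := by
    have ht0 : t ≠ 0 := (zero_lt_one.trans_le ht).ne'
    refine (((hasDerivAt_id t).const_mul (-θ)).exp.fun_div (hasDerivAt_pow (k + 1) t)
      (pow_ne_zero _ ht0)).congr_deriv ?_
    simp only [id, Nat.add_sub_cancel, Nat.cast_add, Nat.cast_one]
    field_simp
    ring
  have hlim : Tendsto (fun t ↦ exp (-θ * t) / t ^ (k + 1)) atTop (𝓝 0) := by
    have he : Tendsto (fun t ↦ exp (-θ * t)) atTop (𝓝 0) :=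
      tendsto_exp_atBot.comp (tendsto_id.const_mul_atTop_of_neg (neg_neg_of_pos hθ))
    exact he.div_atTop (tendsto_pow_atTop k.succ_ne_zero)
  have hint := integrableOn_exp_neg_mul_div_pow (θ := θ)
  have h := integral_Ioi_of_hasDerivAt_of_tendsto' hderiv
    (((hint (k + 1) hθ).const_mul (-θ)).sub ((hint (k + 2) hθ).const_mul (k + 1))) hlim
  rw [integral_sub ((hint (k + 1) hθ).const_mul _) ((hint (k + 2) hθ).const_mul _),
    integral_const_mul, integral_const_mul] at h
  rw [mul_one, one_pow, div_one] at h
  simp only [expInt]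
  linarith

lemma exp_mul_expInt_one (hθ : 0 < θ) :
    exp θ * expInt 1 θ = ∫ x in Ioi 0, exp (-x) / (θ + x) := by
  set g : ℝ → ℝ := fun v ↦ θ * exp (-v) / v
  have hg : expInt 1 θ = ∫ t in Ioi 1, g (θ * t) := by
    refine setIntegral_congr_fun measurableSet_Ioi fun t (ht : 1 < t) ↦ ?_
    have : t ≠ 0 := by positivity
    simp only [g, pow_one, neg_mul]
    field_simp
  have hshift : ∫ x in Ioi 0, exp (-x) / (θ + x) = θ⁻¹ * exp θ * ∫ x in Ioi 0, g (θ + x) := by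
    rw [← integral_const_mul]
    refine setIntegral_congr_fun measurableSet_Ioi fun x (hx : 0 < x) ↦ ?_
    simp only [g, exp_add, exp_neg]
    field_simp
  rw [hshift, hg, integral_comp_mul_left_Ioi g 1 hθ, integral_Ioi_comp_const_add, mul_one, add_zero,
    smul_eq_mul]
  field_simp

end ExpInt

section LogMoment

variable {θ : ℝ}

lemma poissonWeight_mul_log_one_add_div_le (k : ℕ) (hθ : 0 < θ) {x : ℝ} (hx : 0 ≤ x) :
    poissonWeight k x * log (1 + x / θ) ≤ (k + 1) / θ * poissonWeight (k + 1) x := calc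
  _ ≤ poissonWeight k x * (x / θ) := by
    gcongr
    · exact poissonWeight.nonneg k hx
    · linarith [log_le_sub_one_of_pos (by positivity : 0 < 1 + x / θ)]
  _ = (k + 1) / θ * poissonWeight (k + 1) x := by
    rw [div_mul_eq_mul_div, ← poissonWeight.mul_eq_add_one_mul_succ]
    ring

lemma integrableOn_poissonWeight_mul_log_one_add_div (k : ℕ) (hθ : 0 < θ) :
    IntegrableOn (fun x ↦ poissonWeight k x * log (1 + x / θ)) (Ioi 0) := by
  refine ((poissonWeight.integrableOn_Ioi (k + 1)).const_mul ((k + 1) / θ)).mono'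
    (by fun_prop : Measurable _).aestronglyMeasurable ?_
  filter_upwards [ae_restrict_mem measurableSet_Ioi] with x (hx : 0 < x)
  rw [norm_of_nonneg (mul_nonneg (poissonWeight.nonneg k hx.le)
    (log_nonneg (le_add_of_nonneg_right (by positivity))))]
  exact poissonWeight_mul_log_one_add_div_le k hθ hx.le

lemma integrableOn_poissonWeight_div (k : ℕ) (hθ : 0 < θ) :
    IntegrableOn (fun x ↦ poissonWeight k x / (θ + x)) (Ioi 0) := by
  refine ((poissonWeight.integrableOn_Ioi k).div_const θ).mono'
    (by fun_prop : Measurable _).aestronglyMeasurable ?_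
  filter_upwards [ae_restrict_mem measurableSet_Ioi] with x (hx : 0 < x)
  rw [norm_of_nonneg (div_nonneg (poissonWeight.nonneg k hx.le) (by positivity))]
  exact div_le_div_of_nonneg_left (poissonWeight.nonneg k hx.le) hθ (by linarith)

lemma integral_poissonWeight_div (k : ℕ) (hθ : 0 < θ) :
    ∫ x in Ioi 0, poissonWeight k x / (θ + x) = exp θ * expInt (k + 1) θ := by
  induction k with
  | zero => simp [poissonWeight, exp_mul_expInt_one hθ]
  | succ k ih =>
    have hrec : (k + 1) * ∫ x in Ioi 0, poissonWeight (k + 1) x / (θ + x) =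
        1 - θ * ∫ x in Ioi 0, poissonWeight k x / (θ + x) := calc
      _ = ∫ x in Ioi 0, (poissonWeight k x - θ * (poissonWeight k x / (θ + x))) := by
        rw [← integral_const_mul]
        refine setIntegral_congr_fun measurableSet_Ioi fun x (hx : 0 < x) ↦ ?_
        rw [mul_div_assoc', ← poissonWeight.mul_eq_add_one_mul_succ]
        field_simp
        ring
      _ = 1 - θ * ∫ x in Ioi 0, poissonWeight k x / (θ + x) := by
        rw [integral_sub (poissonWeight.integrableOn_Ioi k)
          ((integrableOn_poissonWeight_div k hθ).const_mul θ), integral_const_mul,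
          poissonWeight.integral_Ioi]
    apply mul_left_cancel₀ (by positivity : (k : ℝ) + 1 ≠ 0)
    have hexp : exp θ * exp (-θ) = 1 := by rw [← exp_add, add_neg_cancel, exp_zero]
    rw [hrec, ih]
    linear_combination -exp θ * add_one_mul_expInt_add_two k hθ - hexp

lemma integral_poissonWeight_mul_log_one_add_div (m : ℕ) (hθ : 0 < θ) :
    ∫ x in Ioi 0, poissonWeight m x * log (1 + x / θ) =
      exp θ * ∑ k ∈ Finset.range (m + 1), expInt (k + 1) θ := by
  set S : ℝ → ℝ := fun x ↦ ∑ k ∈ Finset.range (m + 1), poissonWeight k x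
  have hderiv (x : ℝ) (hx : x ∈ Ici 0) : HasDerivAt (fun x ↦ S x * log (1 + x / θ))
      (S x / (θ + x) - poissonWeight m x * log (1 + x / θ)) x := by
    have hx : 0 < 1 + x / θ := add_pos_of_pos_of_nonneg one_pos (div_nonneg hx hθ.le)
    refine (poissonWeight.hasDerivAt_sum m x).fun_mul
      ((((hasDerivAt_id x).div_const θ).const_add 1).log hx.ne') |>.congr_deriv ?_
    simp only [id]
    field_simp
    ring
  have hlim : Tendsto (fun x ↦ S x * log (1 + x / θ)) atTop (𝓝 0) := by
    have hbound : Tendsto (fun x ↦ ∑ k ∈ Finset.range (m + 1),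
        (k + 1) / θ * poissonWeight (k + 1) x) atTop (𝓝 0) := by
      simpa using tendsto_finsetSum _ fun k _ ↦
        (poissonWeight.tendsto_atTop (k + 1)).const_mul ((k + 1) / θ)
    refine squeeze_zero' ?_ ?_ hbound <;>
      filter_upwards [eventually_ge_atTop 0] with x hx <;> simp only [S, Finset.sum_mul]
    · exact Finset.sum_nonneg fun k _ ↦ mul_nonneg (poissonWeight.nonneg k hx)
        (log_nonneg (le_add_of_nonneg_right (by positivity)))
    · exact Finset.sum_le_sum fun k _ ↦ poissonWeight_mul_log_one_add_div_le k hθ hx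
  have hS : IntegrableOn (fun x ↦ S x / (θ + x)) (Ioi 0) := by
    simp only [S, Finset.sum_div]
    exact integrable_finsetSum _ fun k _ ↦ integrableOn_poissonWeight_div k hθ
  have hSint : ∫ x in Ioi 0, S x / (θ + x) =
      exp θ * ∑ k ∈ Finset.range (m + 1), expInt (k + 1) θ := by
    simp only [S, Finset.sum_div, Finset.mul_sum]
    rw [integral_finsetSum _ fun k _ ↦ integrableOn_poissonWeight_div k hθ]
    exact Finset.sum_congr rfl fun k _ ↦ integral_poissonWeight_div k hθ
  have h := integral_Ioi_of_hasDerivAt_of_tendsto' hderiv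
    (hS.sub (integrableOn_poissonWeight_mul_log_one_add_div m hθ)) hlim
  rw [integral_sub hS (integrableOn_poissonWeight_mul_log_one_add_div m hθ), hSint, zero_div,
    add_zero, log_one, mul_zero, sub_zero] at h
  linarith

end LogMoment

section Gamma

lemma integral_gammaMeasure {E : Type*} [NormedAddCommGroup E] [NormedSpace ℝ E] {a r : ℝ}
    (ha : 0 < a) (hr : 0 < r) (f : ℝ → E) :
    ∫ x, f x ∂gammaMeasure a r = ∫ x in Ioi 0, gammaPDFReal a r x • f x := by
  rw [gammaMeasure, integral_withDensity_eq_integral_toReal_smul (f := gammaPDF a r)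
    (measurable_gammaPDFReal a r).ennreal_ofReal (ae_of_all _ fun _ ↦ ENNReal.ofReal_lt_top),
    ← integral_Ici_eq_integral_Ioi, ← setIntegral_eq_integral_of_forall_compl_eq_zero]
  · exact setIntegral_congr_fun measurableSet_Ici fun x _ ↦ by
      rw [gammaPDF, ENNReal.toReal_ofReal (gammaPDFReal_nonneg ha hr x)]
  · intro x (hx : ¬ 0 ≤ x)
    simp [gammaPDF, gammaPDFReal, hx]

lemma gammaPDFReal_natCast_add_one (m : ℕ) (r : ℝ) {x : ℝ} (hx : 0 ≤ x) :
    gammaPDFReal (m + 1 : ℕ) r x = r * poissonWeight m (r * x) := by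
  rw [gammaPDFReal, if_pos hx, Nat.cast_add_one, Gamma_nat_eq_factorial, add_sub_cancel_right,
    ← Nat.cast_add_one, rpow_natCast, rpow_natCast, poissonWeight]
  ring

lemma integral_log_one_add_mul_gammaMeasure (m : ℕ) {r c : ℝ} (hr : 0 < r) (hc : 0 < c) :
    ∫ x, log (1 + c * x) ∂gammaMeasure (m + 1 : ℕ) r =
      exp (r / c) * ∑ k ∈ Finset.range (m + 1), expInt (k + 1) (r / c) := by
  set g : ℝ → ℝ := fun y ↦ poissonWeight m y * log (1 + y / (r / c))
  have hg := integral_comp_mul_left_Ioi g 0 hr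
  rw [mul_zero, integral_poissonWeight_mul_log_one_add_div m (div_pos hr hc), smul_eq_mul] at hg
  calc _ = ∫ x in Ioi 0, r * g (r * x) := by
        rw [integral_gammaMeasure (by positivity) hr]
        refine setIntegral_congr_fun measurableSet_Ioi fun x (hx : 0 < x) ↦ ?_
        rw [gammaPDFReal_natCast_add_one m r hx.le, smul_eq_mul]
        simp only [g]
        field_simp
    _ = _ := by rw [integral_const_mul, hg, mul_inv_cancel_left₀ hr.ne']

end Gamma

theorem ergodic_capacity_noise_limited_general
    {Ω : Type*} [MeasurableSpace Ω] (μ : Measure Ω)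
    (M : ℕ) (hM : 1 ≤ M) (γ : ℝ) (hγ : 0 < γ)
    (G : Ω → ℝ) (hGmeas : Measurable G)
    (hlaw : Measure.map G μ = gammaMeasure (M : ℝ) (1 / γ)) :
    (∀ c : ℝ, 0 < c →
      ∫ ω, Real.log (1 + c * G ω) ∂μ =
        Real.exp (1 / (c * γ)) *
          ∑ i ∈ Finset.range M, expInt (i + 1) (1 / (c * γ))) ∧
    (∀ B r P Pbar α ε N₀ : ℝ, 0 < B → 0 < r → 0 < P → 0 < Pbar → 2 < α →
      ε ∈ Set.Icc (0 : ℝ) 1 → 0 < N₀ →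
      B * ∫ ω, Real.logb 2 (1 + G ω * min (P * r ^ (α * ε)) Pbar * r ^ (-α) / (B * N₀)) ∂μ =
        (B / Real.log 2) *
          Real.exp (B * N₀ * r ^ α / (γ * min (P * r ^ (α * ε)) Pbar)) *
          ∑ i ∈ Finset.range M,
            expInt (i + 1) (B * N₀ * r ^ α / (γ * min (P * r ^ (α * ε)) Pbar))) := by
  obtain ⟨m, rfl⟩ := Nat.exists_eq_add_of_le' hM
  have hlog (c : ℝ) (hc : 0 < c) : ∫ ω, log (1 + c * G ω) ∂μ =
      exp (1 / (c * γ)) * ∑ i ∈ Finset.range (m + 1), expInt (i + 1) (1 / (c * γ)) := by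
    rw [← integral_map hGmeas.aemeasurable (f := fun x ↦ log (1 + c * x))
      (by fun_prop : Measurable fun x : ℝ ↦ log (1 + c * x)).aestronglyMeasurable, hlaw,
      integral_log_one_add_mul_gammaMeasure m (by positivity) hc, div_div, mul_comm γ]
  refine ⟨hlog, fun B r P Pbar α ε N₀ hB hr hP hPbar _ _ hN₀ ↦ ?_⟩
  set ℓ := min (P * r ^ (α * ε)) Pbar
  have hℓ : 0 < ℓ := lt_min (by positivity) hPbar
  have hθ : 1 / (ℓ * r ^ (-α) / (B * N₀) * γ) = B * N₀ * r ^ α / (γ * ℓ) := by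
    rw [rpow_neg hr.le]
    field_simp
  have hlogb (ω : Ω) : logb 2 (1 + G ω * ℓ * r ^ (-α) / (B * N₀)) =
      log (1 + ℓ * r ^ (-α) / (B * N₀) * G ω) / log 2 := by
    rw [logb]
    ring_nf
  rw [integral_congr_ae (ae_of_all _ hlogb), integral_div, hlog _ (by positivity), hθ]
  ring

/-- If `G` has a Gamma law with integer shape `M ≥ 1` and rate `1/γ`, then for every
`c > 0`, `E[log(1 + c⬝G)] = e^θ ⬝ Σ_{i=0}^{M−1} E_{i+1}(θ)` where `θ = 1/(c γ)`.
In particular, the noise-limited ergodic capacity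
`B ⬝ E[log₂(1 + G ℓ r^{-α} / (B N₀))]` equals
`(B / log 2) ⬝ e^θ ⬝ Σ_{i=0}^{M−1} E_{i+1}(θ)` with `θ = B N₀ r^α / (γ ℓ)`. -/
theorem ergodic_capacity_noise_limited
    {Ω : Type*} [MeasurableSpace Ω] (μ : Measure Ω) [IsProbabilityMeasure μ]
    (M : ℕ) (hM : 1 ≤ M) (γ : ℝ) (hγ : 0 < γ)
    (G : Ω → ℝ) (hGmeas : Measurable G)
    (hlaw : Measure.map G μ = gammaMeasure (M : ℝ) (1 / γ)) :
    (∀ c : ℝ, 0 < c →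
      ∫ ω, Real.log (1 + c * G ω) ∂μ =
        Real.exp (1 / (c * γ)) *
          ∑ i ∈ Finset.range M, expInt (i + 1) (1 / (c * γ))) ∧
    (∀ B r P Pbar α ε N₀ : ℝ, 0 < B → 0 < r → 0 < P → 0 < Pbar → 2 < α →
      ε ∈ Set.Icc (0 : ℝ) 1 → 0 < N₀ →
      B * ∫ ω, Real.logb 2 (1 + G ω * min (P * r ^ (α * ε)) Pbar * r ^ (-α) / (B * N₀)) ∂μ =
        (B / Real.log 2) *
          Real.exp (B * N₀ * r ^ α / (γ * min (P * r ^ (α * ε)) Pbar)) *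
          ∑ i ∈ Finset.range M,
            expInt (i + 1) (B * N₀ * r ^ α / (γ * min (P * r ^ (α * ε)) Pbar))) :=
  ergodic_capacity_noise_limited_general μ M hM γ hγ G hGmeas hlaw
end

section
/- Let X and Y be independent random variables with X ≥ 0 almost surely and Y > 0 almost surely, and assume E[log(1 + X/Y)] < ∞. Then E[log(1 + X / Y)] = ∫_0^∞ (1/s) · (1 − E[e^{-s X}]) · E[e^{-s Y}] ds. -/
/-! For `x ≥ 0` and `y > 0`, writing `1/t = ∫₀^∞ e^{-st} ds` inside
`log (1 + x/y) = ∫_y^{y+x} dt/t` and exchanging the integrals gives Frullani's representation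
`log (1 + x/y) = ∫₀^∞ (1/s) (1 - e^{-sx}) e^{-sy} ds`.
Substituting `X`, `Y`, exchanging `E` with `∫ ds`, and factoring
`E[(1 - e^{-sX}) e^{-sY}]` by independence gives the formula. All integrands are nonnegative, so
the computation runs in `ℝ≥0∞`, where Tonelli applies unconditionally. -/

open MeasureTheory Real ProbabilityTheory Set

lemma exp_neg_mul_le_one {s x : ℝ} (hs : 0 ≤ s) (hx : 0 ≤ x) : exp (-s * x) ≤ 1 :=
  exp_le_one_iff.2 (by nlinarith)

lemma one_div_mul_one_sub_exp_mul_exp_mem_Icc {s x y : ℝ} (hs : 0 < s) (hx : 0 ≤ x)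
    (hy : 0 ≤ y) : 1 / s * (1 - exp (-s * x)) * exp (-s * y) ∈ Icc 0 (1 / s) := by
  have hx1 := exp_neg_mul_le_one hs.le hx
  have hy1 := exp_neg_mul_le_one hs.le hy
  have hs' : 0 < 1 / s := by positivity
  have hx0 := exp_pos (-s * x)
  have hy0 := exp_pos (-s * y)
  constructor
  · have : 0 ≤ 1 - exp (-s * x) := by linarith
    positivity
  · rw [mul_assoc]
    refine mul_le_of_le_one_right hs'.le ?_
    nlinarith

lemma lintegral_exp_neg_mul_Ioi {t : ℝ} (ht : 0 < t) :
    ∫⁻ s in Ioi 0, ENNReal.ofReal (exp (-s * t)) = ENNReal.ofReal t⁻¹ := by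
  simp_rw [neg_mul_comm, mul_comm _ (-t)]
  rw [← ofReal_integral_eq_lintegral_ofReal (exp_neg_integrableOn_Ioi 0 ht)
    (.of_forall fun s => (exp_pos _).le), integral_exp_mul_Ioi (neg_neg_of_pos ht)]
  simp

lemma integral_exp_neg_mul {s : ℝ} (hs : s ≠ 0) (a b : ℝ) :
    ∫ t in a..b, exp (-s * t) = (exp (-s * a) - exp (-s * b)) / s := by
  rw [intervalIntegral.integral_comp_mul_left (fun t => exp t) (neg_ne_zero.2 hs), integral_exp]
  simp only [smul_eq_mul]
  field_simp
  ring

lemma ofReal_one_div_mul_one_sub_exp_mul_exp_eq_lintegral {x y s : ℝ} (hx : 0 ≤ x)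
    (hs : s ≠ 0) :
    ENNReal.ofReal (1 / s * (1 - exp (-s * x)) * exp (-s * y)) =
      ∫⁻ t in Ioc y (y + x), ENNReal.ofReal (exp (-s * t)) := by
  have hyx : y ≤ y + x := le_add_of_nonneg_right hx
  rw [← ofReal_integral_eq_lintegral_ofReal (by fun_prop : Continuous _).integrableOn_Ioc
    (.of_forall fun t => (exp_pos _).le), ← intervalIntegral.integral_of_le hyx,
    integral_exp_neg_mul hs, mul_add, exp_add]
  ring_nf

lemma lintegral_one_div_mul_one_sub_exp_mul_exp_eq_ofReal_log {x y : ℝ} (hx : 0 ≤ x)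
    (hy : 0 < y) :
    ∫⁻ s in Ioi 0, ENNReal.ofReal (1 / s * (1 - exp (-s * x)) * exp (-s * y)) =
      ENNReal.ofReal (log (1 + x / y)) := by
  have hyx : y ≤ y + x := le_add_of_nonneg_right hx
  calc ∫⁻ s in Ioi 0, ENNReal.ofReal (1 / s * (1 - exp (-s * x)) * exp (-s * y))
      = ∫⁻ s in Ioi 0, ∫⁻ t in Ioc y (y + x), ENNReal.ofReal (exp (-s * t)) :=
        setLIntegral_congr_fun measurableSet_Ioi fun s hs =>
          ofReal_one_div_mul_one_sub_exp_mul_exp_eq_lintegral hx (ne_of_gt hs)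
    _ = ∫⁻ t in Ioc y (y + x), ∫⁻ s in Ioi 0, ENNReal.ofReal (exp (-s * t)) :=
        lintegral_lintegral_swap (by fun_prop)
    _ = ∫⁻ t in Ioc y (y + x), ENNReal.ofReal t⁻¹ :=
        setLIntegral_congr_fun measurableSet_Ioc fun t ht =>
          lintegral_exp_neg_mul_Ioi (hy.trans ht.1)
    _ = ENNReal.ofReal (∫ t in y..y + x, t⁻¹) := by
        rw [intervalIntegral.integral_of_le hyx, ofReal_integral_eq_lintegral_ofReal]
        · exact (continuousOn_inv₀.mono fun t ht => (hy.trans_le ht.1).ne').integrableOn_Icc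
            |>.mono_set Ioc_subset_Icc_self
        · exact (ae_restrict_iff' measurableSet_Ioc).2 (.of_forall fun t ht =>
            inv_nonneg.2 (hy.trans ht.1).le)
    _ = ENNReal.ofReal (log (1 + x / y)) := by
        rw [integral_inv_of_pos hy (hy.trans_le hyx), add_div, div_self hy.ne']

section Laplace

variable {Ω : Type*} [MeasurableSpace Ω] {μ : Measure Ω} {X Y : Ω → ℝ} {s : ℝ}

lemma integrable_exp_neg_mul [IsFiniteMeasure μ] (hXm : AEMeasurable X μ)
    (hX : ∀ᵐ ω ∂μ, 0 ≤ X ω) (hs : 0 ≤ s) : Integrable (fun ω => exp (-s * X ω)) μ :=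
  .of_bound (by fun_prop) 1 <| hX.mono fun ω hω => by
    rw [norm_of_nonneg (exp_pos _).le]
    exact exp_neg_mul_le_one hs hω

lemma integral_exp_neg_mul_le_one [IsProbabilityMeasure μ] (hX : ∀ᵐ ω ∂μ, 0 ≤ X ω)
    (hs : 0 ≤ s) : ∫ ω, exp (-s * X ω) ∂μ ≤ 1 := by
  have h : ∫ ω, exp (-s * X ω) ∂μ ≤ ∫ _, (1 : ℝ) ∂μ :=
    integral_mono_of_nonneg (.of_forall fun ω => (exp_pos _).le) (integrable_const 1) <|
      hX.mono fun ω hω => exp_neg_mul_le_one hs hω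
  simpa using h

lemma measurable_integral_exp_neg_mul [SFinite μ] (hXm : Measurable X) :
    Measurable fun s : ℝ => ∫ ω, exp (-s * X ω) ∂μ :=
  (StronglyMeasurable.integral_prod_right (f := fun (s : ℝ) ω => exp (-s * X ω))
    (by fun_prop)).measurable

lemma ProbabilityTheory.IndepFun.integral_one_div_mul_one_sub_exp_mul_exp
    [IsProbabilityMeasure μ] (hXY : IndepFun X Y μ) (hXm : AEMeasurable X μ)
    (hYm : AEMeasurable Y μ) (hX : ∀ᵐ ω ∂μ, 0 ≤ X ω) (hs : 0 ≤ s) :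
    ∫ ω, 1 / s * (1 - exp (-s * X ω)) * exp (-s * Y ω) ∂μ =
      1 / s * (1 - ∫ ω, exp (-s * X ω) ∂μ) * ∫ ω, exp (-s * Y ω) ∂μ := by
  simp_rw [mul_assoc, integral_const_mul]
  rw [hXY.integral_fun_comp_mul_comp (f := fun x => 1 - exp (-s * x)) (g := fun y => exp (-s * y))
    hXm hYm (by fun_prop) (by fun_prop),
    integral_sub (integrable_const 1) (integrable_exp_neg_mul hXm hX hs)]
  simp

lemma lintegral_ofReal_log_one_add_div_eq_lintegral_laplace [IsProbabilityMeasure μ]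
    (hXm : Measurable X) (hYm : Measurable Y) (hXY : IndepFun X Y μ)
    (hX : ∀ᵐ ω ∂μ, 0 ≤ X ω) (hY : ∀ᵐ ω ∂μ, 0 < Y ω) :
    ∫⁻ ω, ENNReal.ofReal (log (1 + X ω / Y ω)) ∂μ =
      ∫⁻ s in Ioi (0 : ℝ), ENNReal.ofReal
        (1 / s * (1 - ∫ ω, exp (-s * X ω) ∂μ) * ∫ ω, exp (-s * Y ω) ∂μ) := by
  calc ∫⁻ ω, ENNReal.ofReal (log (1 + X ω / Y ω)) ∂μ
      = ∫⁻ ω, (∫⁻ s in Ioi 0,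
          ENNReal.ofReal (1 / s * (1 - exp (-s * X ω)) * exp (-s * Y ω))) ∂μ :=
        lintegral_congr_ae <| (hX.and hY).mono fun ω hω =>
          (lintegral_one_div_mul_one_sub_exp_mul_exp_eq_ofReal_log hω.1 hω.2).symm
    _ = ∫⁻ s in Ioi (0 : ℝ), ∫⁻ ω,
          ENNReal.ofReal (1 / s * (1 - exp (-s * X ω)) * exp (-s * Y ω)) ∂μ :=
        lintegral_lintegral_swap (by fun_prop)
    _ = _ := setLIntegral_congr_fun measurableSet_Ioi fun s (hs : 0 < s) => by
        rw [← hXY.integral_one_div_mul_one_sub_exp_mul_exp hXm.aemeasurable hYm.aemeasurable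
          hX hs.le]
        refine (ofReal_integral_eq_lintegral_ofReal ?_ ?_).symm
        · refine .of_bound (by fun_prop) (1 / s) ((hX.and hY).mono fun ω hω => ?_)
          have h := one_div_mul_one_sub_exp_mul_exp_mem_Icc hs hω.1 hω.2.le
          rw [norm_of_nonneg h.1]
          exact h.2
        · exact (hX.and hY).mono fun ω hω =>
            (one_div_mul_one_sub_exp_mul_exp_mem_Icc hs hω.1 hω.2.le).1

end Laplace

theorem expectation_log_one_add_div_eq_integral_laplace_general
    {Ω : Type*} [MeasurableSpace Ω] (μ : Measure Ω) [IsProbabilityMeasure μ]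
    (X Y : Ω → ℝ) (hXmeas : Measurable X) (hYmeas : Measurable Y)
    (hindep : IndepFun X Y μ)
    (hX : ∀ᵐ ω ∂μ, 0 ≤ X ω) (hY : ∀ᵐ ω ∂μ, 0 < Y ω) :
    ∫ ω, Real.log (1 + X ω / Y ω) ∂μ =
      ∫ s in Set.Ioi (0 : ℝ),
        (1 / s) * (1 - ∫ ω, Real.exp (-s * X ω) ∂μ) * ∫ ω, Real.exp (-s * Y ω) ∂μ := by
  have hlog_nonneg : 0 ≤ᵐ[μ] fun ω => log (1 + X ω / Y ω) :=
    (hX.and hY).mono fun ω hω => log_nonneg (le_add_of_nonneg_right (div_nonneg hω.1 hω.2.le))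
  have hlaplace_nonneg : 0 ≤ᵐ[volume.restrict (Ioi 0)] fun s : ℝ =>
      1 / s * (1 - ∫ ω, exp (-s * X ω) ∂μ) * ∫ ω, exp (-s * Y ω) ∂μ :=
    (ae_restrict_iff' measurableSet_Ioi).2 <| .of_forall fun s (hs : 0 < s) =>
      mul_nonneg
        (mul_nonneg (by positivity) (sub_nonneg.2 (integral_exp_neg_mul_le_one hX hs.le)))
        (integral_nonneg fun ω => (exp_pos _).le)
  have hLX := measurable_integral_exp_neg_mul (μ := μ) hXmeas
  have hLY := measurable_integral_exp_neg_mul (μ := μ) hYmeas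
  rw [integral_eq_lintegral_of_nonneg_ae hlog_nonneg
      ((hXmeas.div hYmeas).const_add 1).log.aestronglyMeasurable,
    integral_eq_lintegral_of_nonneg_ae hlaplace_nonneg (by fun_prop),
    lintegral_ofReal_log_one_add_div_eq_lintegral_laplace hXmeas hYmeas hindep hX hY]

/-- If `X` and `Y` are independent, `X ≥ 0` a.s., `Y > 0` a.s., and
`E[log(1 + X/Y)]` is finite, then
`E[log(1 + X/Y)] = ∫_0^∞ (1/s) ⬝ (1 − E[e^{-s X}]) ⬝ E[e^{-s Y}] ds`. -/
theorem expectation_log_one_add_div_eq_integral_laplace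
    {Ω : Type*} [MeasurableSpace Ω] (μ : Measure Ω) [IsProbabilityMeasure μ]
    (X Y : Ω → ℝ) (hXmeas : Measurable X) (hYmeas : Measurable Y)
    (hindep : IndepFun X Y μ)
    (hX : ∀ᵐ ω ∂μ, 0 ≤ X ω) (hY : ∀ᵐ ω ∂μ, 0 < Y ω)
    (hint : Integrable (fun ω => Real.log (1 + X ω / Y ω)) μ) :
    ∫ ω, Real.log (1 + X ω / Y ω) ∂μ =
      ∫ s in Set.Ioi (0 : ℝ),
        (1 / s) * (1 - ∫ ω, Real.exp (-s * X ω) ∂μ) * ∫ ω, Real.exp (-s * Y ω) ∂μ :=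
  expectation_log_one_add_div_eq_integral_laplace_general μ X Y hXmeas hYmeas hindep hX hY
end

section
/- For every integer M ≥ 1, the function h_M(x) = e^{x} · Σ_{i=0}^{M−1} E_{i+1}(x) is strictly decreasing on (0, ∞). -/
open MeasureTheory Real

lemma expInt_aux_integrable (n : ℕ) {x : ℝ} (hx : 0 < x) :
    IntegrableOn (fun t : ℝ => Real.exp (-x * t) / t ^ n) (Set.Ioi 1) := by
  apply MeasureTheory.Integrable.mono (exp_neg_integrableOn_Ioi 1 hx)
  · apply ContinuousOn.aestronglyMeasurable _ measurableSet_Ioi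
    apply ContinuousOn.div (by fun_prop) (by fun_prop)
    intro t ht
    have : (1:ℝ) < t := ht
    positivity
  · filter_upwards [ae_restrict_mem measurableSet_Ioi] with t ht
    have ht1 : (1:ℝ) < t := ht
    have h1 : ‖Real.exp (-x * t) / t ^ n‖ = Real.exp (-x * t) / t ^ n := by
      rw [Real.norm_eq_abs, abs_of_pos (by positivity)]
    have h2 : ‖Real.exp (-x * t)‖ = Real.exp (-x * t) := by
      rw [Real.norm_eq_abs, abs_of_pos (Real.exp_pos _)]
    rw [h1, h2]
    exact div_le_self (Real.exp_pos _).le (one_le_pow₀ ht1.le)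

lemma expInt_aux_integrable' (n : ℕ) {x : ℝ} (hx : 0 < x) :
    IntegrableOn (fun t : ℝ => Real.exp (-x * (t - 1)) / t ^ n) (Set.Ioi 1) := by
  have h : (fun t : ℝ => Real.exp (-x * (t - 1)) / t ^ n)
      = fun t => Real.exp x * (Real.exp (-x * t) / t ^ n) := by
    funext t
    rw [← mul_div_assoc, ← Real.exp_add]
    have : -x * (t - 1) = x + -x * t := by ring
    rw [this]
  rw [h]
  exact (expInt_aux_integrable n hx).const_mul _

lemma expInt_key (n : ℕ) {x y : ℝ} (hx : 0 < x) (hxy : x < y) :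
    Real.exp y * expInt n y < Real.exp x * expInt n x := by
  have hy : 0 < y := hx.trans hxy
  have hrep : ∀ z : ℝ, Real.exp z * expInt n z
      = ∫ t in Set.Ioi (1:ℝ), Real.exp (-z * (t - 1)) / t ^ n := by
    intro z
    rw [expInt, ← integral_const_mul]
    congr 1 with t
    rw [← mul_div_assoc, ← Real.exp_add]
    have : z + -z * t = -z * (t - 1) := by ring
    rw [this]
  rw [hrep x, hrep y]
  have hix := expInt_aux_integrable' n hx
  have hiy := expInt_aux_integrable' n hy
  have hF : 0 < ∫ t in Set.Ioi (1:ℝ),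
      (Real.exp (-x * (t - 1)) / t ^ n - Real.exp (-y * (t - 1)) / t ^ n) := by
    rw [setIntegral_pos_iff_support_of_nonneg_ae]
    · have hsub : Set.Ioi (1:ℝ) ⊆ Function.support
          (fun t => Real.exp (-x * (t - 1)) / t ^ n - Real.exp (-y * (t - 1)) / t ^ n) := by
        intro t ht
        have ht1 : (1:ℝ) < t := ht
        have hlt : Real.exp (-y * (t - 1)) < Real.exp (-x * (t - 1)) := by
          apply Real.exp_lt_exp.mpr
          nlinarith
        have htn : (0:ℝ) < t ^ n := by positivity
        have h2 : Real.exp (-y * (t - 1)) / t ^ n < Real.exp (-x * (t - 1)) / t ^ n :=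
          (div_lt_div_iff_of_pos_right htn).mpr hlt
        exact ne_of_gt (by linarith)
      rw [Set.inter_eq_self_of_subset_right hsub, Real.volume_Ioi]
      exact ENNReal.zero_lt_top
    · filter_upwards [ae_restrict_mem measurableSet_Ioi] with t ht
      have ht1 : (1:ℝ) < t := ht
      have hlt : Real.exp (-y * (t - 1)) ≤ Real.exp (-x * (t - 1)) := by
        apply Real.exp_le_exp.mpr
        nlinarith
      have htn : (0:ℝ) < t ^ n := by positivity
      simp only [Pi.zero_apply]
      have h2 : Real.exp (-y * (t - 1)) / t ^ n ≤ Real.exp (-x * (t - 1)) / t ^ n :=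
        (div_le_div_iff_of_pos_right htn).mpr hlt
      linarith
    · exact hix.sub hiy
  have := integral_sub hix hiy
  rw [this] at hF
  linarith

/-- For every integer `M ≥ 1`, the function `h_M(x) = e^x ⬝ Σ_{i=0}^{M−1} E_{i+1}(x)`
is strictly decreasing on `(0, ∞)`. -/
theorem strictAntiOn_exp_mul_sum_expInt (M : ℕ) (hM : 1 ≤ M) :
    StrictAntiOn (fun x : ℝ => Real.exp x * ∑ i ∈ Finset.range M, expInt (i + 1) x)
      (Set.Ioi 0) := by
  intro x hx y hy hxy
  simp only [Finset.mul_sum]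
  apply Finset.sum_lt_sum_of_nonempty (Finset.nonempty_range_iff.mpr (by omega))
  intro i _
  exact expInt_key (i + 1) hx hxy
end

section
/- For every integer M ≥ 1 and every real a > 0, the function B ↦ B · e^{aB} · Σ_{i=0}^{M−1} E_{i+1}(a B) is nondecreasing on (0, ∞), i.e., the noise-limited ergodic capacity is nondecreasing in the allocated bandwidth. -/
open MeasureTheory Real

lemma integrable_aux {a : ℝ} (ha : 0 < a) (n : ℕ) {B : ℝ} (hB : 0 < B) :
    IntegrableOn (fun u => Real.exp (-a * u) / (1 + u / B) ^ n) (Set.Ioi 0) := by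
  have h1 : IntegrableOn (fun u : ℝ => Real.exp (-a * u)) (Set.Ioi 0) :=
    exp_neg_integrableOn_Ioi 0 ha
  have hmeas : AEStronglyMeasurable (fun u => Real.exp (-a * u) / (1 + u / B) ^ n)
      (volume.restrict (Set.Ioi (0:ℝ))) := by
    refine (ContinuousOn.aestronglyMeasurable ?_ measurableSet_Ioi)
    apply ContinuousOn.div (Continuous.continuousOn (by continuity))
      (Continuous.continuousOn (by continuity))
    intro u hu
    have hu0 : (0:ℝ) < u := hu
    positivity
  refine MeasureTheory.Integrable.mono h1 hmeas ?_
  filter_upwards [ae_restrict_mem measurableSet_Ioi] with u hu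
  have hu0 : (0:ℝ) < u := hu
  have hden : (1:ℝ) ≤ (1 + u / B) ^ n := by
    apply one_le_pow₀
    nlinarith [div_pos hu0 hB]
  rw [Real.norm_eq_abs, Real.norm_eq_abs, abs_of_nonneg (by positivity),
    abs_of_nonneg (Real.exp_nonneg _)]
  calc Real.exp (-a * u) / (1 + u / B) ^ n ≤ Real.exp (-a * u) / 1 := by
        apply div_le_div_of_nonneg_left (Real.exp_nonneg _) one_pos hden
    _ = Real.exp (-a * u) := div_one _

lemma capacity_eq (n : ℕ) {a B : ℝ} (ha : 0 < a) (hB : 0 < B) :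
    B * Real.exp (a * B) * expInt n (a * B)
      = ∫ u in Set.Ioi (0:ℝ), Real.exp (-a * u) / (1 + u / B) ^ n := by
  have hBinv : (0:ℝ) < B⁻¹ := inv_pos.mpr hB
  have step1 : (∫ u in Set.Ioi (0:ℝ), Real.exp (-a * u) / (1 + u / B) ^ n)
      = B • ∫ s in Set.Ioi (0:ℝ), Real.exp (-(a*B) * s) / (1 + s) ^ n := by
    have := integral_comp_mul_left_Ioi
      (fun s : ℝ => Real.exp (-(a*B) * s) / (1 + s) ^ n) 0 hBinv
    simp only [mul_zero, inv_inv] at this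
    rw [← this]
    refine setIntegral_congr_fun measurableSet_Ioi fun u hu => ?_
    have : -(a*B) * (B⁻¹ * u) = -a * u := by field_simp
    rw [this]
    congr 2
    field_simp
  have step2 : (∫ s in Set.Ioi (0:ℝ), Real.exp (-(a*B) * s) / (1 + s) ^ n)
      = Real.exp (a * B) * expInt n (a * B) := by
    have hemb : MeasurableEmbedding (fun s : ℝ => s + 1) :=
      (Homeomorph.addRight (1:ℝ)).isClosedEmbedding.measurableEmbedding
    have hmp : MeasurePreserving (fun s : ℝ => s + 1) volume volume :=
      measurePreserving_add_right volume 1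
    have := hmp.setIntegral_preimage_emb hemb
      (fun t : ℝ => Real.exp (a*B) * (Real.exp (-(a*B) * t) / t ^ n)) (Set.Ioi 1)
    have hpre : (fun s : ℝ => s + 1) ⁻¹' Set.Ioi 1 = Set.Ioi 0 := by
      ext s; simp [Set.mem_Ioi]
    rw [hpre] at this
    rw [expInt, ← integral_const_mul, ← this]
    refine setIntegral_congr_fun measurableSet_Ioi fun s hs => ?_
    rw [← mul_div_assoc, ← Real.exp_add]
    congr 2 <;> ring
  rw [step1, step2, smul_eq_mul]
  ring

/-- For every integer `M ≥ 1` and real `a > 0`, the (scaled) noise-limited ergodic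
capacity `B ↦ B e^{aB} Σ_{i=0}^{M−1} E_{i+1}(aB)` is nondecreasing on `(0, ∞)`. -/
theorem monotoneOn_noise_limited_capacity (M : ℕ) (hM : 1 ≤ M) (a : ℝ) (ha : 0 < a) :
    MonotoneOn
      (fun B : ℝ => B * Real.exp (a * B) * ∑ i ∈ Finset.range M, expInt (i + 1) (a * B))
      (Set.Ioi 0) := by
  intro B1 hB1 B2 hB2 h12
  have hB1' : (0:ℝ) < B1 := hB1
  have hB2' : (0:ℝ) < B2 := hB2
  simp only [Finset.mul_sum]
  refine Finset.sum_le_sum fun i _ => ?_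
  rw [capacity_eq (i+1) ha hB1', capacity_eq (i+1) ha hB2']
  refine setIntegral_mono_on (integrable_aux ha (i+1) hB1') (integrable_aux ha (i+1) hB2')
    measurableSet_Ioi fun u hu => ?_
  have hu0 : (0:ℝ) < u := hu
  have h1 : (0:ℝ) < 1 + u / B2 := by positivity
  have h2 : 1 + u / B2 ≤ 1 + u / B1 := by
    have := div_le_div_of_nonneg_left hu0.le hB1' h12
    linarith
  gcongr
end
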